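/- arXiv:2307.10116 — 4 statements merged into one kernel-verified Lean document; each statement's English description precedes it below -/
import Mathlib

section
/- Let λ > 0 and let μ be a probability measure on ℝ with μ([0,∞)) = 1 and ρ = λ m₁ ≤ 1. Then for every s > 0, the imaginary part of φ(s) satisfies Im φ(s) = λ ∫ sin(s x) dμ(x) − s ≤ −(1 − ρ) s, and hence |φ(s)| ≥ (1 − ρ) s. Since φ(−s) is the complex conjugate of φ(s), it follows that if ρ < 1 then φ(s) ≠ 0 for every real s ≠ 0. -/
open MeasureTheory

/-- The characteristic function of a measure `μ` on `ℝ`. -/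
noncomputable def charFn (μ : Measure ℝ) (s : ℝ) : ℂ :=
  ∫ x, Complex.exp (Complex.I * s * x) ∂μ

/-- The characteristic exponent `φ(s) = λ(γ(s) − 1) − i s` of the net input process. -/
noncomputable def phi (lam : ℝ) (μ : Measure ℝ) (s : ℝ) : ℂ :=
  lam * (charFn μ s - 1) - Complex.I * s

/-- The `k`-th moment of a measure on `ℝ`. -/
noncomputable def moment (μ : Measure ℝ) (k : ℕ) : ℝ :=
  ∫ x, x ^ k ∂μ

/-! Since `sin y ≤ y` for `y ≥ 0` and `μ` lives on `[0, ∞)`, integrating gives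
`∫ sin (s x) dμ ≤ s m₁`, whence `Im φ(s) = λ ∫ sin (s x) dμ − s ≤ −(1 − ρ) s` for `s > 0`, and
`|φ(s)| ≥ |Im φ(s)|`. The symmetry `φ(−s) = conj φ(s)` of characteristic functions transfers
the non-vanishing to `s < 0`. -/

section

variable {μ : Measure ℝ}

theorem charFn_eq_charFun (μ : Measure ℝ) (s : ℝ) : charFn μ s = charFun μ s := by
  simp only [charFn, charFun_apply_real, mul_comm Complex.I, mul_right_comm]

theorem phi_neg (lam : ℝ) (μ : Measure ℝ) (s : ℝ) :
    phi lam μ (-s) = starRingEnd ℂ (phi lam μ s) := by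
  simp [phi, charFn_eq_charFun, Complex.conj_I]

theorem integrable_cexp_I_mul [IsFiniteMeasure μ] (s : ℝ) :
    Integrable (fun x : ℝ => Complex.exp (Complex.I * s * x)) μ :=
  Integrable.of_bound (by fun_prop) 1 <| ae_of_all _ fun x => by
    rw [Complex.norm_exp]
    simp

theorem charFn_im [IsFiniteMeasure μ] (s : ℝ) :
    (charFn μ s).im = ∫ x, Real.sin (s * x) ∂μ := by
  rw [charFn, ← RCLike.im_eq_complex_im, ← integral_im (integrable_cexp_I_mul s)]
  congr 1 with x
  rw [RCLike.im_eq_complex_im, show Complex.I * s * x = ((s * x : ℝ) : ℂ) * Complex.I by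
    push_cast; ring, Complex.exp_ofReal_mul_I_im]

theorem phi_im [IsFiniteMeasure μ] (lam s : ℝ) :
    (phi lam μ s).im = lam * (∫ x, Real.sin (s * x) ∂μ) - s := by
  simp [phi, charFn_im]

theorem integral_sin_mul_le [IsFiniteMeasure μ] (hμ : ∀ᵐ x ∂μ, 0 ≤ x)
    (h1 : Integrable (fun x => x) μ) {s : ℝ} (hs : 0 ≤ s) :
    ∫ x, Real.sin (s * x) ∂μ ≤ s * moment μ 1 := by
  have hsin : Integrable (fun x => Real.sin (s * x)) μ :=
    Integrable.of_bound (by fun_prop) 1 <| ae_of_all _ fun x => by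
      simpa using Real.abs_sin_le_one (s * x)
  calc ∫ x, Real.sin (s * x) ∂μ
      ≤ ∫ x, s * x ∂μ := integral_mono_ae hsin (h1.const_mul s) <| by
        filter_upwards [hμ] with x hx using Real.sin_le (mul_nonneg hs hx)
    _ = s * moment μ 1 := by simp only [moment, pow_one]; exact integral_const_mul s _

theorem phi_im_le [IsFiniteMeasure μ] (hμ : ∀ᵐ x ∂μ, 0 ≤ x) (h1 : Integrable (fun x => x) μ)
    {lam s : ℝ} (hlam : 0 ≤ lam) (hs : 0 ≤ s) :
    (phi lam μ s).im ≤ -((1 - lam * moment μ 1) * s) := by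
  have := mul_le_mul_of_nonneg_left (integral_sin_mul_le hμ h1 hs) hlam
  rw [phi_im]
  linarith

theorem le_norm_phi [IsFiniteMeasure μ] (hμ : ∀ᵐ x ∂μ, 0 ≤ x)
    (h1 : Integrable (fun x => x) μ) {lam s : ℝ} (hlam : 0 ≤ lam) (hs : 0 ≤ s) :
    (1 - lam * moment μ 1) * s ≤ ‖phi lam μ s‖ :=
  calc (1 - lam * moment μ 1) * s ≤ -(phi lam μ s).im := le_neg.mpr (phi_im_le hμ h1 hlam hs)
    _ ≤ |(phi lam μ s).im| := neg_le_abs _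
    _ ≤ ‖phi lam μ s‖ := Complex.abs_im_le_norm _

theorem phi_ne_zero [IsFiniteMeasure μ] (hμ : ∀ᵐ x ∂μ, 0 ≤ x)
    (h1 : Integrable (fun x => x) μ) {lam : ℝ} (hlam : 0 ≤ lam) (hρ : lam * moment μ 1 < 1)
    {s : ℝ} (hs : s ≠ 0) : phi lam μ s ≠ 0 := by
  have of_pos {t : ℝ} (ht : 0 < t) : phi lam μ t ≠ 0 := by
    refine norm_pos_iff.mp (lt_of_lt_of_le ?_ (le_norm_phi hμ h1 hlam ht.le))
    exact mul_pos (by linarith) ht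
  rcases hs.lt_or_gt with hs | hs
  · rw [← neg_neg s, phi_neg]
    exact (map_ne_zero _).mpr (of_pos (neg_pos.mpr hs))
  · exact of_pos hs

end

theorem phi_im_and_nonzero_general (lam : ℝ) (hlam : 0 < lam) (μ : Measure ℝ)
    [IsProbabilityMeasure μ] (hsupp : μ (Set.Ici 0) = 1)
    (h1 : Integrable (fun x => x) μ) :
    (∀ s : ℝ, 0 < s →
      (phi lam μ s).im = lam * (∫ x, Real.sin (s * x) ∂μ) - s ∧
      (phi lam μ s).im ≤ -((1 - lam * moment μ 1) * s) ∧
      (1 - lam * moment μ 1) * s ≤ ‖phi lam μ s‖) ∧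
    (∀ s : ℝ, phi lam μ (-s) = starRingEnd ℂ (phi lam μ s)) ∧
    (lam * moment μ 1 < 1 → ∀ s : ℝ, s ≠ 0 → phi lam μ s ≠ 0) := by
  have hμ : ∀ᵐ x ∂μ, 0 ≤ x := (mem_ae_iff_prob_eq_one measurableSet_Ici).mpr hsupp
  refine ⟨fun s hs => ⟨phi_im lam s, phi_im_le hμ h1 hlam.le hs.le,
    le_norm_phi hμ h1 hlam.le hs.le⟩, phi_neg lam μ,
    fun hρ _ hs => phi_ne_zero hμ h1 hlam.le hρ hs⟩

/-- If `ρ = λ m₁ ≤ 1`, then for `s > 0`: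
`Im φ(s) = λ ∫ sin(s x) dμ − s ≤ −(1 − ρ) s` and `|φ(s)| ≥ (1 − ρ) s`;
moreover `φ(−s) = conj (φ(s))`, and if `ρ < 1` then `φ(s) ≠ 0` for all real `s ≠ 0`. -/
theorem phi_im_and_nonzero (lam : ℝ) (hlam : 0 < lam) (μ : Measure ℝ)
    [IsProbabilityMeasure μ] (hsupp : μ (Set.Ici 0) = 1)
    (h1 : Integrable (fun x => x) μ) (hρ : lam * moment μ 1 ≤ 1) :
    (∀ s : ℝ, 0 < s →
      (phi lam μ s).im = lam * (∫ x, Real.sin (s * x) ∂μ) - s ∧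
      (phi lam μ s).im ≤ -((1 - lam * moment μ 1) * s) ∧
      (1 - lam * moment μ 1) * s ≤ ‖phi lam μ s‖) ∧
    (∀ s : ℝ, phi lam μ (-s) = starRingEnd ℂ (phi lam μ s)) ∧
    (lam * moment μ 1 < 1 → ∀ s : ℝ, s ≠ 0 → phi lam μ s ≠ 0) :=
  phi_im_and_nonzero_general lam hlam μ hsupp h1
end

section
/- Let λ > 0 and let μ be a probability measure on ℝ with μ([0,∞)) = 1, ρ = λ m₁ < 1, and m₂ < ∞. Then for every v ≥ 0, the limit as q → 0⁺ of (1/q) · ( q · exp(−ψ(q) v) / ψ(q) − (1 − ρ) ) exists and equals λ m₂ / (2(1 − ρ)) − v. (This is the analytic core of Lemma 3.5 of the paper: the cumulative deviation of the conditional idleness probabilities of the Poisson-sampled M/G/1 workload started at v from the stationary idleness probability 1 − ρ equals ξ times this limit.) -/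
/-!
The substitution `q = ℓ(z)`, `z = ψ(q)` turns the claim into a limit as `z → 0⁺`, because
`(1 - ρ) ψ(q) ≤ ℓ(ψ(q)) = q` forces `ψ(q) → 0⁺`. Writing
`ℓ(z) = (1 - ρ) z + λ ∫ (e^{-zx} - 1 + zx) dμ(x)`, the integrand divided by `z²` is dominated by
`x² / 2` and tends to `x² / 2`, so `ℓ(z) = (1 - ρ) z + (λ m₂ / 2) z² + o(z²)` by dominated
convergence; together with `e^{-zv} = 1 - zv + o(z)` this gives the limit.
-/

open MeasureTheory

/-- The Laplace exponent `ℓ(z) = λ(∫ exp(−z x) dμ(x) − 1) + z` of the net input process. -/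
noncomputable def ell (lam : ℝ) (μ : Measure ℝ) (z : ℝ) : ℝ :=
  lam * ((∫ x, Real.exp (-(z * x)) ∂μ) - 1) + z

open Filter Set Topology Asymptotics Real

lemma exp_neg_le_one_sub_add_sq_div_two {t : ℝ} (ht : 0 ≤ t) :
    exp (-t) ≤ 1 - t + t ^ 2 / 2 := by
  rw [exp_neg, inv_le_iff_one_le_mul₀' (exp_pos t)]
  nlinarith [quadratic_le_exp_of_nonneg ht, sq_nonneg (t ^ 2)]

lemma exp_neg_sub_taylor_isLittleO :
    (fun t : ℝ => exp (-t) - 1 + t - t ^ 2 / 2) =o[𝓝 0] (· ^ 2) := by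
  have h := (exp_sub_sum_range_succ_isLittleO_pow 2).comp_tendsto
    (continuous_neg.tendsto' (0 : ℝ) 0 neg_zero)
  norm_num [Finset.sum_range_succ, Function.comp_def] at h
  exact h.congr_left fun t => by ring

lemma tendsto_exp_neg_mul_sub_one_add_div_sq (x : ℝ) :
    Tendsto (fun z : ℝ => (exp (-(z * x)) - 1 + z * x) / z ^ 2) (𝓝[≠] 0) (𝓝 (x ^ 2 / 2)) := by
  have hzx : Tendsto (fun z : ℝ => z * x) (𝓝 0) (𝓝 0) := by
    simpa using (continuous_mul_const x).tendsto 0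
  have hsq : (fun z : ℝ => (z * x) ^ 2) =O[𝓝 0] (· ^ 2) :=
    (isBigO_const_mul_self (x ^ 2) _ _).congr_left fun z => by ring
  have hrem := ((exp_neg_sub_taylor_isLittleO.comp_tendsto hzx).trans_isBigO hsq)
    |>.tendsto_div_nhds_zero
  have := (hrem.mono_left (nhdsWithin_le_nhds (s := {0}ᶜ))).add_const (x ^ 2 / 2)
  rw [zero_add] at this
  refine this.congr' (eventually_nhdsWithin_of_forall fun z (hz : z ≠ 0) => ?_)
  simp only [Function.comp_def]
  field_simp
  ring

section LaplaceExponent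

variable {μ : Measure ℝ}

lemma integrable_exp_neg_mul [IsFiniteMeasure μ] (hμ : ∀ᵐ x ∂μ, 0 ≤ x) {z : ℝ} (hz : 0 ≤ z) :
    Integrable (fun x => exp (-(z * x))) μ := by
  refine Integrable.mono' (integrable_const 1) (by fun_prop) ?_
  filter_upwards [hμ] with x hx
  rw [norm_of_nonneg (exp_pos _).le, exp_le_one_iff, neg_nonpos]
  exact mul_nonneg hz hx

lemma tendsto_integral_exp_neg_mul_sub_one_add_div_sq (hμ : ∀ᵐ x ∂μ, 0 ≤ x)
    (h2 : Integrable (fun x => x ^ 2) μ) :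
    Tendsto (fun z => ∫ x, (exp (-(z * x)) - 1 + z * x) / z ^ 2 ∂μ) (𝓝[>] 0)
      (𝓝 (moment μ 2 / 2)) := by
  rw [moment, ← integral_div]
  refine tendsto_integral_filter_of_dominated_convergence (fun x => x ^ 2 / 2)
    (Eventually.of_forall fun z => by fun_prop) ?_ (h2.div_const 2)
    (Eventually.of_forall fun x => (tendsto_exp_neg_mul_sub_one_add_div_sq x).mono_left
      (nhdsWithin_mono 0 fun z (hz : 0 < z) => hz.ne'))
  filter_upwards [self_mem_nhdsWithin] with z (hz : 0 < z)
  filter_upwards [hμ] with x hx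
  have hzx : 0 ≤ z * x := mul_nonneg hz.le hx
  rw [norm_div, norm_of_nonneg (by linarith [add_one_le_exp (-(z * x))]),
    norm_of_nonneg (by positivity), div_le_iff₀ (by positivity)]
  linarith [exp_neg_le_one_sub_add_sq_div_two hzx]

variable [IsProbabilityMeasure μ] (lam : ℝ)

lemma ell_sub_mul_eq_integral (hμ : ∀ᵐ x ∂μ, 0 ≤ x) (h1 : Integrable (fun x => x) μ)
    {z : ℝ} (hz : 0 ≤ z) :
    ell lam μ z - (1 - lam * moment μ 1) * z = lam * ∫ x, (exp (-(z * x)) - 1 + z * x) ∂μ := by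
  have hexp := integrable_exp_neg_mul hμ hz
  have hexp_sub : Integrable (fun x => exp (-(z * x)) - 1) μ := hexp.sub (integrable_const 1)
  rw [integral_add hexp_sub (h1.const_mul z), integral_sub hexp (integrable_const 1),
    integral_const_mul, ell, moment]
  simp only [pow_one, integral_const, probReal_univ, smul_eq_mul, one_mul]
  ring

lemma mul_le_ell (hlam : 0 ≤ lam) (hμ : ∀ᵐ x ∂μ, 0 ≤ x) (h1 : Integrable (fun x => x) μ)
    {z : ℝ} (hz : 0 ≤ z) :
    (1 - lam * moment μ 1) * z ≤ ell lam μ z := by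
  have hrem : 0 ≤ ∫ x, (exp (-(z * x)) - 1 + z * x) ∂μ :=
    integral_nonneg fun x => by
      simp only [Pi.zero_apply]
      linarith [add_one_le_exp (-(z * x))]
  linarith [ell_sub_mul_eq_integral lam hμ h1 hz, mul_nonneg hlam hrem]

lemma tendsto_ell_sub_mul_div_sq (hμ : ∀ᵐ x ∂μ, 0 ≤ x) (h1 : Integrable (fun x => x) μ)
    (h2 : Integrable (fun x => x ^ 2) μ) :
    Tendsto (fun z => (ell lam μ z - (1 - lam * moment μ 1) * z) / z ^ 2) (𝓝[>] 0)
      (𝓝 (lam * moment μ 2 / 2)) := by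
  rw [mul_div_assoc]
  refine ((tendsto_integral_exp_neg_mul_sub_one_add_div_sq hμ h2).const_mul lam).congr'
    (eventually_nhdsWithin_of_forall fun z (hz : 0 < z) => ?_)
  dsimp only
  rw [ell_sub_mul_eq_integral lam hμ h1 hz.le, integral_div, mul_div_assoc]

end LaplaceExponent

lemma tendsto_deviation_of_tendsto_sub_mul_div_sq {f : ℝ → ℝ} {a c : ℝ} (ha : a ≠ 0)
    (hf : Tendsto (fun z => (f z - a * z) / z ^ 2) (𝓝[>] 0) (𝓝 c)) (v : ℝ) :
    Tendsto (fun z => 1 / f z * (f z * exp (-(z * v)) / z - a)) (𝓝[>] 0) (𝓝 (c / a - v)) := by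
  have hz : Tendsto (fun z : ℝ => z) (𝓝[>] 0) (𝓝 0) := tendsto_nhdsWithin_of_tendsto_nhds tendsto_id
  have hratio : Tendsto (fun z => f z / z) (𝓝[>] 0) (𝓝 a) := by
    have := (hf.mul hz).const_add a
    rw [mul_zero, add_zero] at this
    refine this.congr' (eventually_nhdsWithin_of_forall fun z (hz : 0 < z) => ?_)
    field_simp
    ring
  have hderiv : HasDerivAt (fun z => exp (-(z * v))) (-v) 0 := by
    simpa using ((hasDerivAt_id (0 : ℝ)).mul_const v).neg.exp
  have hslope : Tendsto (fun z => (exp (-(z * v)) - 1) / z) (𝓝[>] 0) (𝓝 (-v)) := by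
    simpa [div_eq_inv_mul] using hderiv.tendsto_slope_zero_right
  have hexp : Tendsto (fun z => exp (-(z * v))) (𝓝[>] 0) (𝓝 1) := by
    simpa using (hderiv.continuousAt.tendsto).mono_left nhdsWithin_le_nhds
  have := ((hslope.const_mul a).add (hf.mul hexp)).mul (hratio.inv₀ ha)
  rw [show (a * -v + c * 1) * a⁻¹ = c / a - v by field_simp; ring] at this
  refine this.congr' (eventually_nhdsWithin_of_forall fun z (hz : 0 < z) => ?_)
  -- when `f z = 0` both sides vanish, by the `1 / 0 = 0` convention
  by_cases hfz : f z = 0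
  · simp [hfz]
  · field_simp
    ring

lemma tendsto_nhdsGT_zero_of_rightInvOn {f g : ℝ → ℝ} {a : ℝ} (ha : 0 < a) (hf0 : f 0 = 0)
    (hf : ∀ z, 0 ≤ z → a * z ≤ f z) (hg : MapsTo g (Ici 0) (Ici 0))
    (hfg : RightInvOn g f (Ici 0)) :
    Tendsto g (𝓝[>] 0) (𝓝[>] 0) := by
  have hpos : ∀ q : ℝ, 0 < q → 0 < g q := fun q hq => by
    refine (hg (mem_Ici.mpr hq.le)).lt_of_ne fun h => hq.ne ?_
    rw [← hfg (mem_Ici.mpr hq.le), ← h, hf0]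
  have hle : ∀ q : ℝ, 0 < q → g q ≤ q / a := fun q hq => by
    have := hf _ (hpos q hq).le
    rwa [hfg (mem_Ici.mpr hq.le), mul_comm, ← le_div_iff₀ ha] at this
  have hq : Tendsto (fun q : ℝ => q / a) (𝓝[>] 0) (𝓝 0) := by
    simpa using (tendsto_nhdsWithin_of_tendsto_nhds (tendsto_id (x := 𝓝 (0 : ℝ)))).div_const a
  refine tendsto_nhdsWithin_iff.mpr ⟨tendsto_of_tendsto_of_tendsto_of_le_of_le' tendsto_const_nhds
    hq ?_ ?_, ?_⟩ <;> filter_upwards [self_mem_nhdsWithin] with q (hq : 0 < q)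
  exacts [(hpos q hq).le, hle q hq, hpos q hq]

theorem tendsto_idleness_deviation_general (lam : ℝ) (hlam : 0 < lam) (μ : Measure ℝ)
    [IsProbabilityMeasure μ] (hsupp : μ (Set.Ici 0) = 1)
    (h1 : Integrable (fun x => x) μ) (h2 : Integrable (fun x => x ^ 2) μ)
    (hρ : lam * moment μ 1 < 1)
    (ψ : ℝ → ℝ) (hψmap : Set.MapsTo ψ (Set.Ici 0) (Set.Ici 0))
    (hψ : Set.InvOn ψ (ell lam μ) (Set.Ici 0) (Set.Ici 0))
    (v : ℝ) :
    Filter.Tendsto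
      (fun q : ℝ =>
        (1 / q) * (q * Real.exp (-(ψ q * v)) / ψ q - (1 - lam * moment μ 1)))
      (nhdsWithin 0 (Set.Ioi 0))
      (nhds (lam * moment μ 2 / (2 * (1 - lam * moment μ 1)) - v)) := by
  have hgap : 0 < 1 - lam * moment μ 1 := sub_pos.mpr hρ
  have hμ : ∀ᵐ x ∂μ, 0 ≤ x :=
    (ae_mem_iff_measure_eq measurableSet_Ici.nullMeasurableSet).mpr (by rw [hsupp, measure_univ])
  have hψ0 : Tendsto ψ (𝓝[>] 0) (𝓝[>] 0) :=
    tendsto_nhdsGT_zero_of_rightInvOn hgap (by simp [ell]) (fun z => mul_le_ell lam hlam.le hμ h1)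
      hψmap hψ.2
  have key := (tendsto_deviation_of_tendsto_sub_mul_div_sq hgap.ne'
    (tendsto_ell_sub_mul_div_sq lam hμ h1 h2) v).comp hψ0
  rw [div_div] at key
  refine key.congr' (eventually_nhdsWithin_of_forall fun q (hq : 0 < q) => ?_)
  simp only [Function.comp_apply, hψ.2 (mem_Ici.mpr hq.le)]

/-- Analytic core of Lemma 3.5: if `ρ = λ m₁ < 1` and `m₂ < ∞`, and `ψ` is the inverse on
`[0,∞)` of the Laplace exponent `ℓ`, then for every `v ≥ 0`,
`(1/q)( q exp(−ψ(q) v)/ψ(q) − (1 − ρ) ) → λ m₂ / (2(1 − ρ)) − v` as `q → 0⁺`. -/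
theorem tendsto_idleness_deviation (lam : ℝ) (hlam : 0 < lam) (μ : Measure ℝ)
    [IsProbabilityMeasure μ] (hsupp : μ (Set.Ici 0) = 1)
    (h1 : Integrable (fun x => x) μ) (h2 : Integrable (fun x => x ^ 2) μ)
    (hρ : lam * moment μ 1 < 1)
    (ψ : ℝ → ℝ) (hψmap : Set.MapsTo ψ (Set.Ici 0) (Set.Ici 0))
    (hψ : Set.InvOn ψ (ell lam μ) (Set.Ici 0) (Set.Ici 0))
    (v : ℝ) (hv : 0 ≤ v) :
    Filter.Tendsto
      (fun q : ℝ =>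
        (1 / q) * (q * Real.exp (-(ψ q * v)) / ψ q - (1 - lam * moment μ 1)))
      (nhdsWithin 0 (Set.Ioi 0))
      (nhds (lam * moment μ 2 / (2 * (1 - lam * moment μ 1)) - v)) :=
  tendsto_idleness_deviation_general lam hlam μ hsupp h1 h2 hρ ψ hψmap hψ v
end

section
/- Let ξ > 0, a ∈ ℂ, and let F : (0,∞) → ℂ be measurable with |F(t)| ≤ M₃ for all t > 0 (for some M₃ < ∞) and |F(t) − a| ≤ c t^{−2} for all t > 0 (for some c < ∞). For k ≥ 1, let I_k = ∫₀^∞ (ξ^k t^{k−1} e^{−ξ t} / (k−1)!) F(t) dt (the expectation of F under the Erlang(k, ξ) distribution). Then for every k ≥ 3, |I_k − a| ≤ c ξ² / ((k−1)(k−2)), and consequently the series ∑_{k=1}^∞ |I_k − a| converges. (This is the analytic core of Lemma 3.2 of the paper: quadratic-rate convergence of the continuous-time workload implies summability of the deviations of the Poisson-sampled chain from stationarity.) -/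
/-!
Write `ρₖ` for the Erlang`(k, ξ)` density. It integrates to one, so
`Iₖ - a = ∫ ρₖ (F - a)`, and `ρₖ(t) / t² = ξ² / ((k - 1)(k - 2)) · ρₖ₋₂(t)`. Hence
`‖Iₖ - a‖ ≤ c ∫ ρₖ / t² = c ξ² / ((k - 1)(k - 2))`, which is summable in `k`.
-/

open MeasureTheory Set
open scoped Nat

section DensityDeviation

variable {α E : Type*} [MeasurableSpace α] {μ : Measure α}
  [NormedAddCommGroup E] [NormedSpace ℝ E] [CompleteSpace E]

theorem norm_integral_smul_sub_le_of_integral_eq_one {ρ g : α → ℝ} {F : α → E} {a : E}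
    (hρ : Integrable ρ μ) (hρ_nonneg : ∀ᵐ x ∂μ, 0 ≤ ρ x) (hρ_one : ∫ x, ρ x ∂μ = 1)
    (hF : AEStronglyMeasurable F μ) (hρg : Integrable (fun x => ρ x * g x) μ)
    (hFg : ∀ᵐ x ∂μ, ‖F x - a‖ ≤ g x) :
    ‖∫ x, ρ x • F x ∂μ - a‖ ≤ ∫ x, ρ x * g x ∂μ := by
  have hnorm : ∀ᵐ x ∂μ, ‖ρ x • (F x - a)‖ ≤ ρ x * g x := by
    filter_upwards [hρ_nonneg, hFg] with x hx hxg
    rw [norm_smul, Real.norm_of_nonneg hx]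
    exact mul_le_mul_of_nonneg_left hxg hx
  have hdev : Integrable (fun x => ρ x • (F x - a)) μ :=
    hρg.mono' (hρ.aestronglyMeasurable.smul (hF.sub aestronglyMeasurable_const)) hnorm
  have hsplit : ∫ x, ρ x • F x ∂μ - a = ∫ x, ρ x • (F x - a) ∂μ := by
    have hconst : ∫ x, ρ x • a ∂μ = a := by rw [integral_smul_const, hρ_one, one_smul]
    simp_rw [smul_sub]
    rw [integral_sub _ (hρ.smul_const a), hconst]
    exact (hdev.add (hρ.smul_const a)).congr (.of_forall fun x => by simp [smul_sub])
  rw [hsplit]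
  exact norm_integral_le_of_norm_le hρg hnorm

end DensityDeviation

theorem integral_pow_mul_exp_neg_mul_Ioi (n : ℕ) {ξ : ℝ} (hξ : 0 < ξ) :
    ∫ t in Ioi (0 : ℝ), t ^ n * Real.exp (-(ξ * t)) = n ! / ξ ^ (n + 1) := by
  have h := Real.integral_rpow_mul_exp_neg_mul_Ioi (a := (n : ℝ) + 1) (by positivity) hξ
  rw [add_sub_cancel_right, Real.Gamma_nat_eq_factorial, ← Nat.cast_add_one,
    Real.rpow_natCast] at h
  simp only [Real.rpow_natCast] at h
  rw [h, div_pow, one_pow, one_div_mul_eq_div]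

theorem integrableOn_pow_mul_exp_neg_mul_Ioi (n : ℕ) {ξ : ℝ} (hξ : 0 < ξ) :
    IntegrableOn (fun t : ℝ => t ^ n * Real.exp (-(ξ * t))) (Ioi 0) := by
  have h := integrableOn_rpow_mul_exp_neg_mul_rpow (s := n) (p := 1)
    (neg_one_lt_zero.trans_le n.cast_nonneg) zero_lt_one hξ
  simpa only [Real.rpow_one, Real.rpow_natCast, neg_mul] using h

/-- The density of Erlang`(n + 1, ξ)`: indexed by the exponent of `t`, not by the shape. -/
noncomputable def erlangDensity (ξ : ℝ) (n : ℕ) (t : ℝ) : ℝ :=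
  ξ ^ (n + 1) * t ^ n * Real.exp (-(ξ * t)) / n !

section Erlang

variable {ξ : ℝ}

theorem erlangDensity_eq_mul (ξ : ℝ) (n : ℕ) (t : ℝ) :
    erlangDensity ξ n t = ξ ^ (n + 1) / n ! * (t ^ n * Real.exp (-(ξ * t))) := by
  rw [erlangDensity]; ring

theorem erlangDensity_nonneg (hξ : 0 ≤ ξ) (n : ℕ) {t : ℝ} (ht : 0 ≤ t) :
    0 ≤ erlangDensity ξ n t := by
  rw [erlangDensity]; positivity

theorem integrableOn_erlangDensity (hξ : 0 < ξ) (n : ℕ) :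
    IntegrableOn (erlangDensity ξ n) (Ioi 0) := by
  rw [show erlangDensity ξ n = _ from funext (erlangDensity_eq_mul ξ n)]
  exact (integrableOn_pow_mul_exp_neg_mul_Ioi n hξ).const_mul _

theorem integral_erlangDensity (hξ : 0 < ξ) (n : ℕ) :
    ∫ t in Ioi 0, erlangDensity ξ n t = 1 := by
  simp_rw [erlangDensity_eq_mul]
  rw [integral_const_mul, integral_pow_mul_exp_neg_mul_Ioi n hξ]
  field_simp

theorem erlangDensity_add_two_div_sq (ξ : ℝ) (n : ℕ) {t : ℝ} (ht : t ≠ 0) :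
    erlangDensity ξ (n + 2) t / t ^ 2 =
      ξ ^ 2 / ((n + 2) * (n + 1)) * erlangDensity ξ n t := by
  simp only [erlangDensity, Nat.factorial_succ]
  push_cast
  field_simp
  ring

theorem norm_integral_erlangDensity_smul_sub_le {E : Type*} [NormedAddCommGroup E]
    [NormedSpace ℝ E] [CompleteSpace E] (hξ : 0 < ξ) {F : ℝ → E} {a : E}
    (hF : AEStronglyMeasurable F (volume.restrict (Ioi 0)))
    {c : ℝ} (hc : ∀ t : ℝ, 0 < t → ‖F t - a‖ ≤ c / t ^ 2) (n : ℕ) :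
    ‖(∫ t in Ioi 0, erlangDensity ξ (n + 2) t • F t) - a‖ ≤ c * ξ ^ 2 / ((n + 2) * (n + 1)) := by
  have hρg : ∀ t ∈ Ioi (0 : ℝ), erlangDensity ξ (n + 2) t * (c / t ^ 2) =
      c * ξ ^ 2 / ((n + 2) * (n + 1)) * erlangDensity ξ n t := fun t ht => by
    rw [mul_div_left_comm, erlangDensity_add_two_div_sq ξ n (ne_of_gt ht)]
    ring
  have hint : IntegrableOn (fun t => c * ξ ^ 2 / ((n + 2) * (n + 1)) * erlangDensity ξ n t)
      (Ioi 0) := (integrableOn_erlangDensity hξ n).const_mul _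
  calc ‖(∫ t in Ioi 0, erlangDensity ξ (n + 2) t • F t) - a‖
      ≤ ∫ t in Ioi 0, erlangDensity ξ (n + 2) t * (c / t ^ 2) := by
        refine norm_integral_smul_sub_le_of_integral_eq_one (integrableOn_erlangDensity hξ _)
          ?_ (integral_erlangDensity hξ _) hF
          (hint.congr_fun (fun t ht => (hρg t ht).symm) measurableSet_Ioi) ?_
        all_goals filter_upwards [ae_restrict_mem measurableSet_Ioi] with t ht
        exacts [erlangDensity_nonneg hξ.le _ (le_of_lt ht), hc t ht]
    _ = c * ξ ^ 2 / ((n + 2) * (n + 1)) := by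
        rw [setIntegral_congr_fun measurableSet_Ioi hρg, integral_const_mul,
          integral_erlangDensity hξ, mul_one]

end Erlang

theorem summable_one_div_add_two_mul_add_one :
    Summable fun n : ℕ => 1 / (((n : ℝ) + 2) * ((n : ℝ) + 1)) := by
  have hsq := (summable_nat_add_iff 1).mpr (Real.summable_one_div_nat_pow.mpr one_lt_two)
  refine hsq.of_nonneg_of_le (fun n => by positivity) fun n => ?_
  push_cast
  exact one_div_le_one_div_of_le (by positivity) (by nlinarith)

theorem erlang_expectation_deviation_summable_general (ξ : ℝ) (hξ : 0 < ξ) (a : ℂ)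
    (F : ℝ → ℂ) (hF : Measurable F)
    (c : ℝ) (hc : ∀ t : ℝ, 0 < t → ‖F t - a‖ ≤ c / t ^ 2) :
    (∀ k : ℕ, 3 ≤ k →
      ‖(∫ t in Set.Ioi (0 : ℝ),
            ((ξ ^ k * t ^ (k - 1) * Real.exp (-(ξ * t)) / (Nat.factorial (k - 1)) : ℝ) : ℂ)
              * F t) - a‖
        ≤ c * ξ ^ 2 / (((k : ℝ) - 1) * ((k : ℝ) - 2))) ∧
    Summable (fun k : ℕ =>
      ‖(∫ t in Set.Ioi (0 : ℝ),
            ((ξ ^ (k + 1) * t ^ k * Real.exp (-(ξ * t)) / (Nat.factorial k) : ℝ) : ℂ)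
              * F t) - a‖) := by
  have key (n : ℕ) : ‖(∫ t in Ioi 0, (erlangDensity ξ (n + 2) t : ℂ) * F t) - a‖ ≤
      c * ξ ^ 2 / ((n + 2) * (n + 1)) := by
    simpa only [Complex.real_smul] using
      norm_integral_erlangDensity_smul_sub_le hξ hF.aestronglyMeasurable hc n
  refine ⟨fun k hk => ?_, ?_⟩
  · obtain ⟨n, rfl⟩ : ∃ n, k = n + 3 := ⟨k - 3, by omega⟩
    have hk1 : ((n + 3 : ℕ) : ℝ) - 1 = n + 2 := by push_cast; ring
    have hk2 : ((n + 3 : ℕ) : ℝ) - 2 = n + 1 := by push_cast; ring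
    rw [hk1, hk2]
    exact key n
  · rw [← summable_nat_add_iff 2]
    refine .of_nonneg_of_le (fun _ => norm_nonneg _) key ?_
    simpa only [mul_one_div] using summable_one_div_add_two_mul_add_one.mul_left (c * ξ ^ 2)

/-- Analytic core of Lemma 3.2: if `F` is bounded and converges to `a` at a quadratic rate,
then its Erlang`(k, ξ)` expectations `I_k` satisfy `|I_k − a| ≤ c ξ²/((k−1)(k−2))` for
`k ≥ 3`, and `∑_{k=1}^∞ |I_k − a| < ∞`. -/
theorem erlang_expectation_deviation_summable (ξ : ℝ) (hξ : 0 < ξ) (a : ℂ)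
    (F : ℝ → ℂ) (hF : Measurable F)
    (M₃ : ℝ) (hM₃ : ∀ t : ℝ, 0 < t → ‖F t‖ ≤ M₃)
    (c : ℝ) (hc : ∀ t : ℝ, 0 < t → ‖F t - a‖ ≤ c / t ^ 2) :
    (∀ k : ℕ, 3 ≤ k →
      ‖(∫ t in Set.Ioi (0 : ℝ),
            ((ξ ^ k * t ^ (k - 1) * Real.exp (-(ξ * t)) / (Nat.factorial (k - 1)) : ℝ) : ℂ)
              * F t) - a‖
        ≤ c * ξ ^ 2 / (((k : ℝ) - 1) * ((k : ℝ) - 2))) ∧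
    Summable (fun k : ℕ =>
      ‖(∫ t in Set.Ioi (0 : ℝ),
            ((ξ ^ (k + 1) * t ^ k * Real.exp (-(ξ * t)) / (Nat.factorial k) : ℝ) : ℂ)
              * F t) - a‖) :=
  erlang_expectation_deviation_summable_general ξ hξ a F hF c hc
end

section
/- Let λ > 0 and let μ be a probability measure on ℝ with μ([0,∞)) = 1 and ρ = λ m₁ < 1. Then for every s > 0, (1 − ρ) / (1 + ρ) ≤ (1 − ρ) s / |φ(s)| ≤ 1. In particular, the modulus of the stationary workload characteristic function s φ′(0)/φ(s) given by the generalized Pollaczek–Khinchine formula is bounded below, uniformly in s > 0, by the positive constant (1 − ρ)/(1 + ρ). -/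
open MeasureTheory

/-!
Since `‖exp (i θ) - 1‖ ≤ |θ|`, the jump part `λ (γ(s) - 1)` of `φ(s)` has modulus at most
`λ |s| ∫ |x| dμ`, which is `ρ s` for `s > 0` when the job sizes are nonnegative. So `φ(s)` lies
within `ρ s` of `-i s`, i.e. `s (1 - ρ) ≤ ‖φ(s)‖ ≤ s (1 + ρ)`, and both bounds follow.
-/

lemma norm_charFn_sub_one_le (μ : Measure ℝ) [IsProbabilityMeasure μ]
    (h1 : Integrable (fun x => x) μ) (s : ℝ) :
    ‖charFn μ s - 1‖ ≤ |s| * ∫ x, |x| ∂μ := by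
  have hexp : Integrable (fun x : ℝ => Complex.exp (Complex.I * s * x)) μ :=
    Integrable.of_bound (by fun_prop) 1 (ae_of_all _ fun x => by
      rw [show Complex.I * s * x = ((s * x : ℝ) : ℂ) * Complex.I by push_cast; ring,
        Complex.norm_exp_ofReal_mul_I])
  calc ‖charFn μ s - 1‖ = ‖∫ x, (Complex.exp (Complex.I * s * x) - 1) ∂μ‖ := by
        rw [integral_sub hexp (integrable_const 1), integral_const, probReal_univ, one_smul,
          charFn]
    _ ≤ ∫ x, |s| * |x| ∂μ := by
        refine norm_integral_le_of_norm_le (h1.abs.const_mul _) (ae_of_all _ fun x => ?_)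
        rw [← abs_mul, ← Real.norm_eq_abs,
          show Complex.I * s * x = Complex.I * ((s * x : ℝ) : ℂ) by push_cast; ring]
        exact Real.norm_exp_I_mul_ofReal_sub_one_le
    _ = |s| * ∫ x, |x| ∂μ := integral_const_mul _ _

lemma abs_norm_phi_sub_abs_le {lam : ℝ} (hlam : 0 ≤ lam) (μ : Measure ℝ)
    [IsProbabilityMeasure μ] (h1 : Integrable (fun x => x) μ) (s : ℝ) :
    |(‖phi lam μ s‖ - |s|)| ≤ lam * (|s| * ∫ x, |x| ∂μ) := by
  calc |(‖phi lam μ s‖ - |s|)|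
      = |(‖phi lam μ s‖ - ‖-(Complex.I * s)‖)| := by simp
    _ ≤ ‖(lam : ℂ) * (charFn μ s - 1)‖ := by
        simpa [phi] using abs_norm_sub_norm_le (phi lam μ s) (-(Complex.I * s))
    _ ≤ lam * (|s| * ∫ x, |x| ∂μ) := by
        rw [norm_mul, Complex.norm_real, Real.norm_of_nonneg hlam]
        exact mul_le_mul_of_nonneg_left (norm_charFn_sub_one_le μ h1 s) hlam

lemma integral_abs_eq_moment_one {μ : Measure ℝ} (hμ : ∀ᵐ x ∂μ, 0 ≤ x) :
    ∫ x, |x| ∂μ = moment μ 1 := by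
  simp only [moment, pow_one]
  exact integral_congr_ae (hμ.mono fun x hx => abs_of_nonneg hx)

/-- If `ρ = λ m₁ < 1`, then for every `s > 0`,
`(1 − ρ)/(1 + ρ) ≤ (1 − ρ) s / |φ(s)| ≤ 1`, i.e. the modulus of the stationary workload
characteristic function `sφ′(0)/φ(s)` is uniformly bounded below by `(1 − ρ)/(1 + ρ)`. -/
theorem stationary_cf_modulus_bounds (lam : ℝ) (hlam : 0 < lam)
    (μ : Measure ℝ) [IsProbabilityMeasure μ] (hsupp : μ (Set.Ici 0) = 1)
    (h1 : Integrable (fun x => x) μ) (hρ : lam * moment μ 1 < 1) :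
    ∀ s : ℝ, 0 < s →
      (1 - lam * moment μ 1) / (1 + lam * moment μ 1)
          ≤ (1 - lam * moment μ 1) * s / ‖phi lam μ s‖ ∧
      (1 - lam * moment μ 1) * s / ‖phi lam μ s‖ ≤ 1 := by
  intro s hs
  have hnonneg : ∀ᵐ x ∂μ, 0 ≤ x := (mem_ae_iff_prob_eq_one measurableSet_Ici).2 hsupp
  have hρ_nonneg : 0 ≤ lam * moment μ 1 := by
    rw [← integral_abs_eq_moment_one hnonneg]
    exact mul_nonneg hlam.le (integral_nonneg fun x => abs_nonneg x)
  set ρ := lam * moment μ 1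
  have hphi : |‖phi lam μ s‖ - s| ≤ s * ρ := by
    have := abs_norm_phi_sub_abs_le hlam.le μ h1 s
    rwa [abs_of_pos hs, integral_abs_eq_moment_one hnonneg, mul_left_comm] at this
  obtain ⟨hphi_lower, hphi_upper⟩ := abs_le.1 hphi
  have hphi_pos : 0 < ‖phi lam μ s‖ := by nlinarith
  constructor
  · rw [div_le_div_iff₀ (by linarith) hphi_pos, mul_assoc]
    exact mul_le_mul_of_nonneg_left (by linarith) (by linarith)
  · exact div_le_one_of_le₀ (by linarith) hphi_pos.le
end
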